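/- If f: S → ℂ is a nonzero solution of the Van Vleck equation f(xσ(y)z₀) − f(xyz₀) = 2f(x)f(y), then f(xσ(z₀)z₀) = f(x)f(z₀) and f(xz₀z₀) = −f(x)f(z₀) for all x ∈ S. -/

import Mathlib

/-!
Adding the equation at `(x₀, y)` and `(x₀, σ y)` with `f x₀ ≠ 0` shows `f ∘ σ = -f`. The equation
at the four pairs `(x a, b)`, `(x σa, b)`, `(x, a b)`, `(x, a σb)` involves only the values of `f`
at `x a' b' z₀` with `a' ∈ {a, σa}`, `b' ∈ {b, σb}`; eliminating them gives
`f x (f (a b) - f (a σb)) = f b (f (x a) + f (x σa))` whenever `σ` is multiplicative on these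
products, in particular when `a` or `b` is `z₀`.
If `f z₀ = 0`, this makes `x ↦ f (x z₀)` proportional to `f`, which is incompatible with the
equation; so `f z₀ ≠ 0`, and the same identity yields the companion equation
`f (x σy σz₀) + f (x y z₀) = -2 f x f y`. At `y = σ z₀` it gives `2 f (x σz₀ z₀) = 2 f x f z₀`,
and the equation at `y = z₀` gives the second identity.
-/

open Function

section Involution

variable {S : Type*} [Semigroup S] {σ : S → S}

theorem map_mul_of_commute
    (hσ : (∀ x y, σ (x * y) = σ x * σ y) ∨ (∀ x y, σ (x * y) = σ y * σ x))
    {a b : S} (hab : Commute (σ a) (σ b)) : σ (a * b) = σ a * σ b := by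
  rcases hσ with hσ | hσ
  · exact hσ a b
  · rw [hσ, hab.eq]

theorem commute_map_of_forall_commute
    (hσ : (∀ x y, σ (x * y) = σ x * σ y) ∨ (∀ x y, σ (x * y) = σ y * σ x))
    (hσσ : Involutive σ) {z : S} (hz : ∀ x, Commute z x) (x : S) : Commute (σ z) x := by
  rw [← hσσ x]
  rcases hσ with hσ | hσ <;> rw [Commute, SemiconjBy, ← hσ, ← hσ, (hz (σ x)).eq]

end Involution

section VanVleck

variable {S K : Type*} [Semigroup S] [Field K] [NeZero (2 : K)]

def IsVanVleckSolution (σ : S → S) (z₀ : S) (f : S → K) : Prop :=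
  ∀ x y, f (x * σ y * z₀) - f (x * y * z₀) = 2 * f x * f y

namespace IsVanVleckSolution

variable {σ : S → S} {z₀ : S} {f : S → K}

theorem apply_map_eq_neg (hf : IsVanVleckSolution σ z₀ f) (hσσ : Involutive σ) {x₀ : S}
    (hx₀ : f x₀ ≠ 0) (y : S) : f (σ y) = -f y := by
  have h := hf x₀ y
  have h' := hf x₀ (σ y)
  rw [hσσ] at h'
  have : 2 * f x₀ * (f (σ y) + f y) = 0 := by linear_combination -h - h'
  simpa [hx₀, two_ne_zero, eq_neg_iff_add_eq_zero] using this

theorem mul_sub_eq_mul_add (hf : IsVanVleckSolution σ z₀ f) {a b : S}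
    (h₁ : σ (a * b) = σ a * σ b) (h₂ : σ (a * σ b) = σ a * b) (x : S) :
    f x * (f (a * b) - f (a * σ b)) = f b * (f (x * a) + f (x * σ a)) := by
  have e₁ := hf (x * a) b
  have e₂ := hf (x * σ a) b
  have e₃ := hf x (a * b)
  have e₄ := hf x (a * σ b)
  rw [h₁] at e₃
  rw [h₂] at e₄
  simp only [mul_assoc] at e₁ e₂ e₃ e₄
  refine mul_left_cancel₀ (two_ne_zero (α := K)) ?_
  linear_combination e₁ + e₂ - e₃ + e₄

section Central

variable (hσ : (∀ x y, σ (x * y) = σ x * σ y) ∨ (∀ x y, σ (x * y) = σ y * σ x))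
  (hσσ : Involutive σ) (hz : ∀ x, Commute z₀ x)

include hσ hσσ hz

theorem mul_sub_central_right (hf : IsVanVleckSolution σ z₀ f) (x y : S) :
    f x * (f (y * z₀) - f (y * σ z₀)) = f z₀ * (f (x * y) + f (x * σ y)) := by
  have hσz := commute_map_of_forall_commute hσ hσσ hz
  refine hf.mul_sub_eq_mul_add (map_mul_of_commute hσ (hσz (σ y)).symm) ?_ x
  rw [map_mul_of_commute hσ (by rw [hσσ]; exact (hz (σ y)).symm), hσσ]

theorem mul_sub_central_left (hf : IsVanVleckSolution σ z₀ f) (x y : S) :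
    f x * (f (z₀ * y) - f (z₀ * σ y)) = f y * (f (x * z₀) + f (x * σ z₀)) := by
  have hσz := commute_map_of_forall_commute hσ hσσ hz
  refine hf.mul_sub_eq_mul_add (map_mul_of_commute hσ (hσz (σ y))) ?_ x
  rw [map_mul_of_commute hσ (hσz (σ (σ y))), hσσ]

theorem mul_apply_mul_comm_of_apply_eq_zero (hf : IsVanVleckSolution σ z₀ f) {x₀ : S}
    (hx₀ : f x₀ ≠ 0) (h0 : f z₀ = 0) (x z : S) : f x * f (z * z₀) = f z * f (x * z₀) := by
  have hσz := commute_map_of_forall_commute hσ hσσ hz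
  have hσz₀ (y : S) : f (y * σ z₀) = f (y * z₀) := by
    have h := hf.mul_sub_central_right hσ hσσ hz x₀ y
    rw [h0, zero_mul, mul_sub, sub_eq_zero] at h
    exact (mul_left_cancel₀ hx₀ h).symm
  have hodd : f (σ z * z₀) = -f (z * z₀) := by
    rw [← hσz₀, ← map_mul_of_commute hσ (hσz (σ z)).symm, hf.apply_map_eq_neg hσσ hx₀]
  have h := hf.mul_sub_central_left hσ hσσ hz x z
  rw [(hz z).eq, (hz (σ z)).eq, hodd, hσz₀] at h
  refine mul_left_cancel₀ (two_ne_zero (α := K)) ?_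
  linear_combination h

theorem apply_ne_zero (hf : IsVanVleckSolution σ z₀ f) (hf0 : f ≠ 0) : f z₀ ≠ 0 := by
  obtain ⟨x₀, hx₀⟩ : ∃ x, f x ≠ 0 := Function.ne_iff.mp hf0
  intro h0
  obtain ⟨c, hc⟩ : ∃ c, ∀ x, f (x * z₀) = c * f x := by
    refine ⟨f (x₀ * z₀) / f x₀, fun x => ?_⟩
    rw [div_mul_eq_mul_div, eq_div_iff hx₀]
    linear_combination -(hf.mul_apply_mul_comm_of_apply_eq_zero hσ hσσ hz hx₀ h0 x x₀)
  have hc0 : c = 0 := by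
    have h := hf z₀ x₀
    rw [(hz (σ x₀)).eq, (hz x₀).eq, hc, hc, hc, hc, hf.apply_map_eq_neg hσσ hx₀, h0] at h
    have : 2 * c * c * f x₀ = 0 := by linear_combination -h
    simpa [hx₀, two_ne_zero] using this
  have h := hf x₀ x₀
  rw [hc, hc, hc0] at h
  simp [hx₀, two_ne_zero] at h

theorem add_eq_neg_two_mul (hf : IsVanVleckSolution σ z₀ f) (hz₀ : f z₀ ≠ 0) (x y : S) :
    f (x * σ y * σ z₀) + f (x * y * z₀) = -(2 * f x * f y) := by
  have hσz := commute_map_of_forall_commute hσ hσσ hz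
  have h := hf.mul_sub_central_right hσ hσσ hz x (y * z₀)
  have e := hf y z₀
  rw [map_mul_of_commute hσ (hσz (σ y)).symm] at h
  simp only [mul_assoc] at h e ⊢
  rw [(hz (σ z₀)).eq] at h
  refine mul_left_cancel₀ hz₀ ?_
  linear_combination -h - f x * e

end Central

end IsVanVleckSolution

end VanVleck

theorem stmt9 {S : Type*} [Semigroup S] (σ : S → S) (hσ : (∀ x y, σ (x * y) = σ x * σ y) ∨ (∀ x y, σ (x * y) = σ y * σ x))
    (hσσ : ∀ x, σ (σ x) = x)
    (z₀ : S) (hz : ∀ x, z₀ * x = x * z₀) (f : S → ℂ) (hf0 : f ≠ 0) (hf : ∀ x y, f (x * σ y * z₀) - f (x * y * z₀) = 2 * f x * f y) :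
    ∀ x, f (x * σ z₀ * z₀) = f x * f z₀ ∧ f (x * z₀ * z₀) = -(f x * f z₀) := by
  have hf : IsVanVleckSolution σ z₀ f := hf
  have hz₀ := hf.apply_ne_zero hσ hσσ hz hf0
  intro x
  have h := hf.add_eq_neg_two_mul hσ hσσ hz hz₀ x (σ z₀)
  rw [hσσ, mul_assoc x z₀, hz (σ z₀), ← mul_assoc, hf.apply_map_eq_neg hσσ hz₀] at h
  constructor
  · linear_combination h / 2
  · linear_combination h / 2 - hf x z₀
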